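/- Let G = Gp⟨X | r_i(u_1,…,u_k) = 1 (i ∈ I)⟩ where the words u_1,…,u_k ∈ (X ∪ X⁻¹)* are uniquely marked: each u_j contains a letter x_j (or its inverse) exactly once, and x_j occurs in no other factor. Then G is isomorphic to the free product H ∗ FG(X′), where H = Gp⟨z_1,…,z_k | r_i(z_1,…,z_k) = 1 (i ∈ I)⟩, X′ = X minus the marker letters, and the isomorphism sends z_j to u_j. In particular, H embeds in G as the subgroup generated by u_1,…,u_k. -/

import Mathlib

/-- An inverse monoid: a monoid with an involution `⁻¹` such that `x * x⁻¹ * x = x`,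
`x⁻¹ * x * x⁻¹ = x⁻¹` and all idempotents commute (these conditions are equivalent to
uniqueness of generalized inverses). -/
class InverseMonoid (M : Type*) extends Monoid M, Inv M where
  mul_inv_mul : ∀ x : M, x * x⁻¹ * x = x
  inv_mul_inv : ∀ x : M, x⁻¹ * x * x⁻¹ = x⁻¹
  idem_comm : ∀ e f : M, e * e = e → f * f = f → e * f = f * e

namespace InverseMonoid

variable {M : Type*} [InverseMonoid M]

/-- An idempotent element. -/
def IsIdem (e : M) : Prop := e * e = e

/-- The natural partial order on an inverse monoid: `x ≤ y` iff `x = y * e` for some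
idempotent `e`. -/
def le (x y : M) : Prop := ∃ e : M, IsIdem e ∧ x = y * e

/-- The compatibility relation: `m ∼ n` iff `m * n⁻¹` and `m⁻¹ * n` are idempotent. -/
def Compatible (m n : M) : Prop := IsIdem (m * n⁻¹) ∧ IsIdem (m⁻¹ * n)

/-- `z` is the meet (greatest lower bound) of `m` and `n` in the natural partial order. -/
def IsMeet (m n z : M) : Prop :=
  le z m ∧ le z n ∧ ∀ w : M, le w m → le w n → le w z

/-- An inverse monoid is E-unitary iff its compatibility relation is transitive. -/
def EUnitary (M : Type*) [InverseMonoid M] : Prop :=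
  ∀ a b c : M, Compatible a b → Compatible b c → Compatible a c

end InverseMonoid

open InverseMonoid

/-- Evaluation of a word over `X ∪ X⁻¹` in a monoid with involution. -/
def wordProd {X M : Type*} [Monoid M] [Inv M] (f : X → M) (w : List (X × Bool)) : M :=
  (w.map fun p => if p.2 then f p.1 else (f p.1)⁻¹).prod

/-- The formal inverse of a word over `X ∪ X⁻¹`. -/
def winv {X : Type*} (w : List (X × Bool)) : List (X × Bool) :=
  (w.map fun p => (p.1, !p.2)).reverse

/-- The set of relators in the free group determined by a family of relator words. -/
def presRels {X I : Type*} (rel : I → List (X × Bool)) : Set (FreeGroup X) :=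
  Set.range fun i => FreeGroup.mk (rel i)

/-- The canonical projection from the free group onto a presented group. -/
def toPres {X : Type*} (R : Set (FreeGroup X)) : FreeGroup X →* PresentedGroup R :=
  QuotientGroup.mk' (Subgroup.normalClosure R)

/-- The prefix monoid of a group presentation: the submonoid of the presented group
generated by the images of all prefixes of the relator words. -/
def prefixMonoid {X I : Type*} (rel : I → List (X × Bool)) :
    Submonoid (PresentedGroup (presRels rel)) :=
  Submonoid.closure
    {g | ∃ (i : I) (p : List (X × Bool)), p <+: rel i ∧ g = toPres (presRels rel) (FreeGroup.mk p)}

/-- The signed factor word `u_j^ε`. -/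
def sfac {X : Type*} {k : ℕ} (u : Fin k → List (X × Bool)) (q : Fin k × Bool) :
    List (X × Bool) :=
  if q.2 then u q.1 else winv (u q.1)

/-!
Tietze transformations: adjoin generators `z_j` with relations `z_j = u_j`, then use
`u_j = p_j x_j^{±1} q_j` to eliminate each marker, `x_j^{±1} = p_j⁻¹ z_j q_j⁻¹`. This is
legitimate because no marker occurs in any `p_l` or `q_l`. What remains are the generators `z_j`
and the unmarked letters `X′`, subject only to the relators `r_i(z_1, …, z_k)`; as these involve
no letter of `X′`, the letters of `X′` span a free factor.
-/

section WordProd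

variable {X M G L : Type*} [Group G] [Group L]

def signed (b : Bool) (g : G) : G := if b then g else g⁻¹

@[simp]
lemma signed_true (g : G) : signed true g = g := rfl

@[simp]
lemma signed_false (g : G) : signed false g = g⁻¹ := rfl

@[simp]
lemma signed_signed (b : Bool) (g : G) : signed b (signed b g) = g := by
  cases b <;> simp

@[simp]
lemma map_signed (φ : G →* L) (b : Bool) (g : G) : φ (signed b g) = signed b (φ g) := by
  cases b <;> simp

@[simp]
lemma wordProd_nil [Monoid M] [Inv M] (f : X → M) : wordProd f [] = 1 := rfl

lemma wordProd_cons (f : X → G) (a : X × Bool) (w : List (X × Bool)) :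
    wordProd f (a :: w) = signed a.2 (f a.1) * wordProd f w := rfl

lemma wordProd_append [Monoid M] [Inv M] (f : X → M) (v w : List (X × Bool)) :
    wordProd f (v ++ w) = wordProd f v * wordProd f w := by
  simp [wordProd]

lemma wordProd_congr [Monoid M] [Inv M] {f g : X → M} {w : List (X × Bool)}
    (h : ∀ a ∈ w, f a.1 = g a.1) : wordProd f w = wordProd g w := by
  unfold wordProd
  exact congrArg List.prod (List.map_congr_left fun a ha => by rw [h a ha])

lemma wordProd_winv (f : X → G) (w : List (X × Bool)) :
    wordProd f (winv w) = (wordProd f w)⁻¹ := by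
  induction w with
  | nil => simp [winv]
  | cons a w ih =>
    rw [wordProd_cons, mul_inv_rev, ← ih]
    obtain ⟨x, _ | _⟩ := a <;> simp [winv, wordProd_append, wordProd_cons] at ih ⊢

lemma map_wordProd (φ : G →* L) (f : X → G) (w : List (X × Bool)) :
    φ (wordProd f w) = wordProd (φ ∘ f) w := by
  induction w with
  | nil => simp
  | cons a w ih => simp [wordProd_cons, ih]

lemma FreeGroup.lift_mk_eq_wordProd (f : X → G) (w : List (X × Bool)) :
    FreeGroup.lift f (FreeGroup.mk w) = wordProd f w := by
  rw [FreeGroup.lift_mk]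
  exact congrArg List.prod (List.map_congr_left fun ⟨x, b⟩ _ => by cases b <;> rfl)

lemma wordProd_flatten_map_sfac {k : ℕ} (f : X → G) (u : Fin k → List (X × Bool))
    (s : List (Fin k × Bool)) :
    wordProd f ((s.map (sfac u)).flatten) = wordProd (fun j => wordProd f (u j)) s := by
  induction s with
  | nil => simp
  | cons a s ih =>
    obtain ⟨j, _ | _⟩ := a <;>
      simp [wordProd_append, wordProd_cons, ih, sfac, wordProd_winv]

end WordProd

section Presentation

variable {X I G : Type*} [Group G]

lemma toPres_mk (R : Set (FreeGroup X)) (w : List (X × Bool)) :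
    toPres R (FreeGroup.mk w) = wordProd PresentedGroup.of w := by
  rw [← FreeGroup.lift_of_apply (FreeGroup.mk w), FreeGroup.lift_mk_eq_wordProd, map_wordProd]
  rfl

lemma wordProd_of_rel_eq_one (rel : I → List (X × Bool)) (i : I) :
    wordProd (PresentedGroup.of (rels := presRels rel)) (rel i) = 1 := by
  rw [← toPres_mk]
  exact PresentedGroup.one_of_mem ⟨i, rfl⟩

def presLift (rel : I → List (X × Bool)) (f : X → G) (hf : ∀ i, wordProd f (rel i) = 1) :
    PresentedGroup (presRels rel) →* G :=
  PresentedGroup.toGroup (f := f) (by rintro _ ⟨i, rfl⟩; rw [FreeGroup.lift_mk_eq_wordProd, hf])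

variable {rel : I → List (X × Bool)} {f : X → G} {hf : ∀ i, wordProd f (rel i) = 1}

@[simp]
lemma presLift_of (x : X) : presLift rel f hf (PresentedGroup.of x) = f x :=
  PresentedGroup.toGroup.of _

@[simp]
lemma presLift_wordProd_of (w : List (X × Bool)) :
    presLift rel f hf (wordProd PresentedGroup.of w) = wordProd f w := by
  rw [map_wordProd]
  exact wordProd_congr fun _ _ => presLift_of _

end Presentation

lemma List.exists_eq_append_cons_of_count_map_eq_one {α β : Type*} [DecidableEq β]
    {f : α → β} {w : List α} {b : β} (h : (w.map f).count b = 1) :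
    ∃ p a q, w = p ++ a :: q ∧ f a = b ∧ b ∉ p.map f ∧ b ∉ q.map f := by
  obtain ⟨a, ha, hab⟩ := List.mem_map.1 (List.count_pos_iff.1 (h ▸ Nat.one_pos))
  obtain ⟨p, q, rfl⟩ := List.append_of_mem ha
  refine ⟨p, a, q, rfl, hab, ?_⟩
  simp only [List.map_append, List.map_cons, List.count_append, List.count_cons, hab,
    beq_self_eq_true, if_true] at h
  exact ⟨List.count_eq_zero.1 (by omega), List.count_eq_zero.1 (by omega)⟩

section Marking

variable {X : Type*} {k : ℕ}

/-- The factorisations `u_j ≡ p_j y_j q_j` of uniquely marked words: `pre j = p_j`,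
`suf j = q_j`, and `y_j` is `x_j` or `x_j⁻¹` according to `sign j`. -/
structure UniqueMarking (u : Fin k → List (X × Bool)) (marker : Fin k → X) where
  injective : Function.Injective marker
  pre : Fin k → List (X × Bool)
  sign : Fin k → Bool
  suf : Fin k → List (X × Bool)
  eq_append : ∀ j, u j = pre j ++ (marker j, sign j) :: suf j
  pre_unmarked : ∀ j, ∀ a ∈ pre j, a.1 ∉ Set.range marker
  suf_unmarked : ∀ j, ∀ a ∈ suf j, a.1 ∉ Set.range marker

namespace UniqueMarking

variable {u : Fin k → List (X × Bool)} {marker : Fin k → X}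

theorem nonempty [DecidableEq X] (hmark : ∀ j, ((u j).map Prod.fst).count (marker j) = 1)
    (hsep : ∀ j l, j ≠ l → marker j ∉ (u l).map Prod.fst) :
    Nonempty (UniqueMarking u marker) := by
  have hmem : ∀ j, marker j ∈ (u j).map Prod.fst := fun j =>
    List.count_pos_iff.1 ((hmark j).symm ▸ Nat.one_pos)
  choose p a q hu ha hp hq using fun j => List.exists_eq_append_cons_of_count_map_eq_one (hmark j)
  have unmarked : ∀ j (w : List (X × Bool)), marker j ∉ w.map Prod.fst →
      (∀ c ∈ w, c ∈ u j) → ∀ c ∈ w, c.1 ∉ Set.range marker := by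
    rintro j w hj hw c hc ⟨l, hl⟩
    obtain rfl | hne := eq_or_ne l j
    · exact hj (hl ▸ List.mem_map_of_mem hc)
    · exact hsep l j hne (hl ▸ List.mem_map_of_mem (hw c hc))
  have hinj : Function.Injective marker := fun j l h => by
    by_contra hne
    exact hsep j l hne (h ▸ hmem l)
  refine ⟨⟨hinj, p, fun j => (a j).2, q, fun j => ?_, fun j => ?_, fun j => ?_⟩⟩
  · rw [hu j, ← ha j]
  · exact unmarked j _ (hp j) fun c hc => by rw [hu j]; exact List.mem_append_left _ hc
  · exact unmarked j _ (hq j) fun c hc => by rw [hu j]; simp [hc]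

variable (M : UniqueMarking u marker) {L L' : Type*} [Group L] [Group L']

/-- `e` on unmarked letters; the marker `x_j` goes to the solution `y` of
`wordProd e (pre j) * y^{±1} * wordProd e (suf j) = z j`. -/
noncomputable def eliminate (e : X → L) (z : Fin k → L) : X → L :=
  Function.extend marker
    (fun j => signed (M.sign j) ((wordProd e (M.pre j))⁻¹ * z j * (wordProd e (M.suf j))⁻¹)) e

lemma eliminate_of_notMem (e : X → L) (z : Fin k → L) {x : X} (hx : x ∉ Set.range marker) :
    M.eliminate e z x = e x :=
  Function.extend_apply' _ _ _ hx

lemma wordProd_eliminate (e : X → L) (z : Fin k → L) (j : Fin k) :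
    wordProd (M.eliminate e z) (u j) = z j := by
  have hpre : wordProd (M.eliminate e z) (M.pre j) = wordProd e (M.pre j) :=
    wordProd_congr fun a ha => M.eliminate_of_notMem e z (M.pre_unmarked j a ha)
  have hsuf : wordProd (M.eliminate e z) (M.suf j) = wordProd e (M.suf j) :=
    wordProd_congr fun a ha => M.eliminate_of_notMem e z (M.suf_unmarked j a ha)
  rw [M.eq_append j, wordProd_append, wordProd_cons, hpre, hsuf, eliminate,
    M.injective.extend_apply, signed_signed]
  group

lemma map_eliminate (g : L →* L') {e : X → L} {z : Fin k → L} {e' : X → L'}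
    (he : ∀ x ∉ Set.range marker, g (e x) = e' x) (hz : ∀ j, g (z j) = wordProd e' (u j))
    (x : X) : g (M.eliminate e z x) = e' x := by
  by_cases hx : x ∈ Set.range marker
  · obtain ⟨j, rfl⟩ := hx
    have hunmarked : ∀ w : List (X × Bool), (∀ a ∈ w, a.1 ∉ Set.range marker) →
        g (wordProd e w) = wordProd e' w := fun w hw => by
      rw [map_wordProd]
      exact wordProd_congr fun a ha => he _ (hw a ha)
    rw [eliminate, M.injective.extend_apply, map_signed, map_mul, map_mul, map_inv, map_inv,
      hunmarked _ (M.pre_unmarked j), hunmarked _ (M.suf_unmarked j), hz, M.eq_append j,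
      wordProd_append, wordProd_cons]
    simp [mul_assoc]
  · rw [M.eliminate_of_notMem e z hx, he x hx]

end UniqueMarking

end Marking

section Tietze

open Monoid

variable {X I : Type*} {k : ℕ} {rel : I → List (X × Bool)} {u : Fin k → List (X × Bool)}
  {seqs : I → List (Fin k × Bool)}

lemma wordProd_rel_eq_wordProd_seqs {G : Type*} [Group G]
    (hfac : ∀ i, rel i = ((seqs i).map (sfac u)).flatten) (f : X → G) (i : I) :
    wordProd f (rel i) = wordProd (fun j => wordProd f (u j)) (seqs i) := by
  rw [hfac, wordProd_flatten_map_sfac]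

def substHom (hfac : ∀ i, rel i = ((seqs i).map (sfac u)).flatten) :
    PresentedGroup (presRels seqs) →* PresentedGroup (presRels rel) :=
  presLift seqs (fun j => wordProd PresentedGroup.of (u j)) fun i => by
    rw [← wordProd_rel_eq_wordProd_seqs hfac, wordProd_of_rel_eq_one]

lemma range_substHom (hfac : ∀ i, rel i = ((seqs i).map (sfac u)).flatten) :
    (substHom hfac).range =
      Subgroup.closure (Set.range fun j => wordProd PresentedGroup.of (u j)) := by
  rw [MonoidHom.range_eq_map, ← PresentedGroup.closure_range_of, MonoidHom.map_closure,
    ← Set.range_comp]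
  congr 2
  funext j
  exact presLift_of j

variable (marker : Fin k → X)

def ofCoprod (hfac : ∀ i, rel i = ((seqs i).map (sfac u)).flatten) :
    Coprod (PresentedGroup (presRels seqs)) (FreeGroup {x // x ∉ Set.range marker}) →*
      PresentedGroup (presRels rel) :=
  Coprod.lift (substHom hfac) (FreeGroup.lift fun x => PresentedGroup.of x.1)

namespace UniqueMarking

variable {marker} (M : UniqueMarking u marker)
  (hfac : ∀ i, rel i = ((seqs i).map (sfac u)).flatten)

noncomputable def toCoprod :
    PresentedGroup (presRels rel) →*
      Coprod (PresentedGroup (presRels seqs)) (FreeGroup {x // x ∉ Set.range marker}) :=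
  presLift rel
    (M.eliminate (Function.extend Subtype.val (Coprod.inr ∘ FreeGroup.of) 1)
      (Coprod.inl ∘ PresentedGroup.of)) fun i => by
    rw [wordProd_rel_eq_wordProd_seqs hfac]
    simp only [M.wordProd_eliminate]
    rw [← map_wordProd, wordProd_of_rel_eq_one, map_one]

lemma toCoprod_of_notMem {x : X} (hx : x ∉ Set.range marker) :
    M.toCoprod hfac (PresentedGroup.of x) = Coprod.inr (FreeGroup.of ⟨x, hx⟩) := by
  rw [toCoprod, presLift_of, M.eliminate_of_notMem _ _ hx]
  exact Subtype.val_injective.extend_apply _ _ (⟨x, hx⟩ : {x // x ∉ Set.range marker})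

lemma toCoprod_wordProd_factor (j : Fin k) :
    M.toCoprod hfac (wordProd PresentedGroup.of (u j)) = Coprod.inl (PresentedGroup.of j) := by
  rw [toCoprod, presLift_wordProd_of, M.wordProd_eliminate]
  rfl

lemma ofCoprod_comp_toCoprod : (ofCoprod marker hfac).comp (M.toCoprod hfac) = .id _ := by
  refine PresentedGroup.ext fun x => ?_
  change ofCoprod marker hfac (presLift rel _ _ (.of x)) = .of x
  rw [presLift_of]
  refine M.map_eliminate _ (fun x hx => ?_) (fun j => ?_) x
  · rw [Subtype.val_injective.extend_apply _ _ (⟨x, hx⟩ : {x // x ∉ Set.range marker})]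
    exact (Coprod.lift_apply_inr _ _ _).trans (FreeGroup.lift_apply_of ..)
  · exact (Coprod.lift_apply_inl _ _ _).trans (presLift_of j)

lemma toCoprod_comp_ofCoprod : (M.toCoprod hfac).comp (ofCoprod marker hfac) = .id _ := by
  refine Coprod.hom_ext (PresentedGroup.ext fun j => ?_) (FreeGroup.ext_hom _ _ fun x => ?_)
  · simp [ofCoprod, substHom, toCoprod_wordProd_factor]
  · simpa [ofCoprod] using M.toCoprod_of_notMem hfac x.2

noncomputable def mulEquivCoprod :
    PresentedGroup (presRels rel) ≃*
      Coprod (PresentedGroup (presRels seqs)) (FreeGroup {x // x ∉ Set.range marker}) :=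
  MonoidHom.toMulEquiv (M.toCoprod hfac) (ofCoprod marker hfac) (M.ofCoprod_comp_toCoprod hfac)
    (M.toCoprod_comp_ofCoprod hfac)

end UniqueMarking

lemma UniqueMarking.injective_substHom {marker : Fin k → X} (M : UniqueMarking u marker)
    (hfac : ∀ i, rel i = ((seqs i).map (sfac u)).flatten) :
    Function.Injective (substHom hfac) := by
  have hinl : ∀ a, (M.mulEquivCoprod hfac).symm (Coprod.inl a) = substHom hfac a :=
    fun _ => rfl
  intro a b h
  refine Coprod.inl_injective (N := FreeGroup {x // x ∉ Set.range marker})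
    ((M.mulEquivCoprod hfac).symm.injective ?_)
  rw [hinl, hinl, h]

end Tietze

open Monoid in
theorem stmt15_general {X I : Type*} [DecidableEq X] {k : ℕ} (rel : I → List (X × Bool))
    (u : Fin k → List (X × Bool)) (seqs : I → List (Fin k × Bool))
    (hfac : ∀ i, rel i = ((seqs i).map (sfac u)).flatten)
    (marker : Fin k → X)
    (hmark : ∀ j : Fin k, ((u j).map Prod.fst).count (marker j) = 1)
    (hsep : ∀ j l : Fin k, j ≠ l → marker j ∉ (u l).map Prod.fst) :
    (∃ e : PresentedGroup (presRels rel) ≃*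
        Coprod (PresentedGroup (Set.range fun i => FreeGroup.mk (seqs i)))
          (FreeGroup {x : X // x ∉ Set.range marker}),
      (∀ j : Fin k, e (toPres (presRels rel) (FreeGroup.mk (u j))) =
        Coprod.inl (toPres (Set.range fun i => FreeGroup.mk (seqs i)) (FreeGroup.of j))) ∧
      (∀ x : {x : X // x ∉ Set.range marker}, e (toPres (presRels rel) (FreeGroup.of x.1)) =
        Coprod.inr (FreeGroup.of x))) ∧
    (∃ ψ : PresentedGroup (Set.range fun i => FreeGroup.mk (seqs i)) →*
        PresentedGroup (presRels rel),
      Function.Injective ψ ∧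
      (∀ j : Fin k, ψ (toPres (Set.range fun i => FreeGroup.mk (seqs i)) (FreeGroup.of j)) =
        toPres (presRels rel) (FreeGroup.mk (u j))) ∧
      ψ.range = Subgroup.closure
        (Set.range fun j : Fin k => toPres (presRels rel) (FreeGroup.mk (u j)))) := by
  obtain ⟨M⟩ := UniqueMarking.nonempty hmark hsep
  simp only [toPres_mk]
  exact ⟨⟨M.mulEquivCoprod hfac, M.toCoprod_wordProd_factor hfac,
      fun x => M.toCoprod_of_notMem hfac x.2⟩,
    ⟨substHom hfac, M.injective_substHom hfac, fun j => presLift_of j, range_substHom hfac⟩⟩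

open Monoid in
/-- If the relators of `G = Gp⟨X | r_i(u_1,…,u_k) = 1⟩` factorise over
uniquely marked words `u_1, …, u_k` (each `u_j` contains its marker letter exactly once,
and in no other factor), then `G ≅ H ∗ FG(X′)` where
`H = Gp⟨z_1,…,z_k | r_i(z_1,…,z_k) = 1⟩` and `X′` is `X` minus the marker letters, the
isomorphism sending `u_j` to `z_j` and fixing `X′`.  In particular `H` embeds in `G` as
the subgroup generated by `u_1, …, u_k`. -/
theorem stmt15 {X I : Type*} [DecidableEq X] {k : ℕ} (rel : I → List (X × Bool))
    (u : Fin k → List (X × Bool)) (seqs : I → List (Fin k × Bool))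
    (hfac : ∀ i, rel i = ((seqs i).map (sfac u)).flatten)
    (marker : Fin k → X) (hinj : Function.Injective marker)
    (hmark : ∀ j : Fin k, ((u j).map Prod.fst).count (marker j) = 1)
    (hsep : ∀ j l : Fin k, j ≠ l → marker j ∉ (u l).map Prod.fst) :
    (∃ e : PresentedGroup (presRels rel) ≃*
        Coprod (PresentedGroup (Set.range fun i => FreeGroup.mk (seqs i)))
          (FreeGroup {x : X // x ∉ Set.range marker}),
      (∀ j : Fin k, e (toPres (presRels rel) (FreeGroup.mk (u j))) =
        Coprod.inl (toPres (Set.range fun i => FreeGroup.mk (seqs i)) (FreeGroup.of j))) ∧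
      (∀ x : {x : X // x ∉ Set.range marker}, e (toPres (presRels rel) (FreeGroup.of x.1)) =
        Coprod.inr (FreeGroup.of x))) ∧
    (∃ ψ : PresentedGroup (Set.range fun i => FreeGroup.mk (seqs i)) →*
        PresentedGroup (presRels rel),
      Function.Injective ψ ∧
      (∀ j : Fin k, ψ (toPres (Set.range fun i => FreeGroup.mk (seqs i)) (FreeGroup.of j)) =
        toPres (presRels rel) (FreeGroup.mk (u j))) ∧
      ψ.range = Subgroup.closure
        (Set.range fun j : Fin k => toPres (presRels rel) (FreeGroup.mk (u j)))) :=
  stmt15_general rel u seqs hfac marker hmark hsep
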